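/- Let ℒ = Φ ∂_x Φ^{−1} where Φ = 1 + Σ_{s≥1} φ_s(x)∂_x^{−s} is a wave operator, ψ = Φ e^{kx} the wave function and ψ⁺ = (e^{−kx})Φ^{−1} the dual wave function. Then the coefficients J_s of the expansion ψ⁺ψ = 1 + Σ_{s≥2} J_s k^{−s} satisfy J_{n+1} = res_∂ ℒⁿ for every n ≥ 1. -/

import Mathlib

/-!
STATEMENT 9: Let ℒ = Φ∂Φ^{−1} with Φ = 1 + Σ_{s≥1} φ_s ∂^{−s} a wave operator,
ψ = Φe^{kx}, ψ⁺ = (e^{−kx})Φ^{−1}.  Then the coefficients J_s of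
ψ⁺ψ = 1 + Σ_{s≥2} J_s k^{−s} satisfy J_{n+1} = res_∂ ℒⁿ for every n ≥ 1.

Pseudodifferential operators `(N, c)` represent `Σ c s ∂^{N-s}`.
`ψ⁺ψ` is the product of the formal Laurent series in k given by the right-adjoint
symbol of Φ^{−1} and the (left) symbol of Φ, and `J_{n+1}` is its `k^{−(n+1)}`
coefficient.
-/

noncomputable section

def PsDO : Type := ℤ × (ℕ → PowerSeries ℂ)

namespace PsDO

def gbin (n : ℤ) (j : ℕ) : ℂ :=
  (∏ i ∈ Finset.range j, ((n : ℂ) - (i : ℂ))) / (j.factorial : ℂ)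

def coeffAt (A : PsDO) (n : ℤ) : PowerSeries ℂ :=
  if n ≤ A.1 then A.2 (A.1 - n).toNat else 0

def mul (A B : PsDO) : PsDO :=
  (A.1 + B.1, fun t => ∑ s ∈ Finset.range (t + 1), ∑ j ∈ Finset.range (t + 1 - s),
    A.2 s * PowerSeries.C (gbin (A.1 - s) j) *
      (PowerSeries.derivativeFun)^[j] (B.2 (t - s - j)))

def one : PsDO := (0, fun s => if s = 0 then 1 else 0)

def Dx : PsDO := (1, fun s => if s = 0 then 1 else 0)

def pow (A : PsDO) (n : ℕ) : PsDO := (mul A)^[n] one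

def rightSym (A : PsDO) : PsDO :=
  (A.1, fun t => ∑ j ∈ Finset.range (t + 1),
    PowerSeries.C ((-1 : ℂ) ^ j * gbin (A.1 - (t - j)) j) *
      (PowerSeries.derivativeFun)^[j] (A.2 (t - j)))

def smul (A B : PsDO) : PsDO :=
  (A.1 + B.1, fun t => ∑ s ∈ Finset.range (t + 1), A.2 s * B.2 (t - s))

def res (A : PsDO) : PowerSeries ℂ := coeffAt A (-1)

end PsDO

/-!
By associativity of composition and `Ψ Φ = 1`, `ℒⁿ = Φ ∂ⁿ Ψ`. For arbitrary operators `A`, `B`,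
the `k⁻¹` coefficient of `(e^{-kx} B) (A e^{kx})` is `res_∂ (A B)`: by the reflection
`(-1)ʲ (N - r choose j) = (j + r - 1 - N choose j)` both are the same double sum. Taking
`A = Φ ∂ⁿ`, `B = Ψ`, and noting that `Φ ∂ⁿ e^{kx} = kⁿ Φ e^{kx}`, gives `J_{n+1} = res_∂ ℒⁿ`.

Associativity, the only substantial input, reduces to `∂ˣ (B C) = (∂ˣ B) C`, which follows from
the Leibniz rule `∂ˣ f = Σ (x choose j) f⁽ʲ⁾ ∂ˣ⁻ʲ` and Chu–Vandermonde in the form `∂ˣ ∂ʸ = ∂ˣ⁺ʸ`.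
-/

open Finset

section Antidiagonal

variable {M : Type*} [AddCommMonoid M]

theorem Finset.Nat.sum_antidiagonal_sum_antidiagonal_fst (n : ℕ) (f : ℕ → ℕ → ℕ → M) :
    ∑ ar ∈ antidiagonal n, ∑ bc ∈ antidiagonal ar.1, f bc.1 bc.2 ar.2 =
      ∑ bk ∈ antidiagonal n, ∑ cr ∈ antidiagonal bk.2, f bk.1 cr.1 cr.2 := by
  rw [sum_sigma', sum_sigma']
  refine sum_nbij' (fun x => ⟨(x.2.1, x.2.2 + x.1.2), (x.2.2, x.1.2)⟩)
    (fun x => ⟨(x.1.1 + x.2.1, x.2.2), (x.1.1, x.2.1)⟩) ?_ ?_ ?_ ?_ ?_ <;>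
    rintro ⟨⟨a, r⟩, b, c⟩ h <;>
    simp only [mem_sigma, HasAntidiagonal.mem_antidiagonal] at h ⊢ <;>
    obtain ⟨rfl, rfl⟩ := h <;>
    simp only [add_assoc, and_self]

theorem Finset.Nat.sum_antidiagonal_sum_antidiagonal_snd_comm (n : ℕ) (f : ℕ → ℕ → ℕ → M) :
    ∑ ar ∈ antidiagonal n, ∑ bc ∈ antidiagonal ar.2, f ar.1 bc.1 bc.2 =
      ∑ br ∈ antidiagonal n, ∑ ac ∈ antidiagonal br.2, f ac.1 br.1 ac.2 := by
  rw [← Nat.sum_antidiagonal_sum_antidiagonal_fst,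
    ← Nat.sum_antidiagonal_sum_antidiagonal_fst n fun a b c => f b a c]
  exact sum_congr rfl fun _ _ => (sum_antidiagonal_swap ..).symm

end Antidiagonal

theorem Derivation.iterate_eq_coe_pow {R A : Type*} [CommSemiring R] [CommSemiring A]
    [Algebra R A] (D : Derivation R A A) (j : ℕ) : (⇑D)^[j] = ⇑((D : A →ₗ[R] A) ^ j) := by
  rw [Module.End.coe_pow, Derivation.coeFn_coe]

theorem Derivation.iterate_leibniz {R A : Type*} [CommSemiring R] [CommSemiring A] [Algebra R A]
    (D : Derivation R A A) (n : ℕ) (a b : A) :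
    D^[n] (a * b) = ∑ ij ∈ antidiagonal n, n.choose ij.1 • (D^[ij.1] a * D^[ij.2] b) := by
  induction n with
  | zero => simp
  | succ n ih =>
    rw [sum_antidiagonal_choose_succ_nsmul (fun i j => D^[i] a * D^[j] b) n]
    simp only [Function.iterate_succ_apply', ih, map_sum, map_nsmul, Derivation.leibniz,
      smul_eq_mul, smul_add, sum_add_distrib]
    congr 1
    refine sum_congr rfl fun ij hij => ?_
    rw [n.choose_symm_of_eq_add (HasAntidiagonal.mem_antidiagonal.1 hij).symm, mul_comm]

namespace PsDO

theorem gbin_eq_choose (n : ℤ) (j : ℕ) : gbin n j = Ring.choose (n : ℂ) j := by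
  rw [Ring.choose_eq_smul, ← Polynomial.aeval_eq_smeval, Polynomial.aeval_def,
    ← Polynomial.eval_map, descPochhammer_map, descPochhammer_eval_eq_prod_range, smul_eq_mul,
    gbin, div_eq_inv_mul]

theorem gbin_zero_right (n : ℤ) : gbin n 0 = 1 := by
  rw [gbin_eq_choose, Ring.choose_zero_right]

theorem gbin_zero_left {j : ℕ} (hj : 0 < j) : gbin 0 j = 0 := by
  rw [gbin_eq_choose, Int.cast_zero, Ring.choose_zero_pos ℂ hj]

theorem gbin_add (a b : ℤ) (k : ℕ) :
    gbin (a + b) k = ∑ ij ∈ antidiagonal k, gbin a ij.1 * gbin b ij.2 := by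
  simp only [gbin_eq_choose, Int.cast_add]
  exact Ring.add_choose_eq k (Commute.all _ _)

theorem gbin_add_mul_choose (n : ℤ) (a b : ℕ) :
    gbin n (a + b) * (a + b).choose a = gbin n a * gbin (n - a) b := by
  simp only [gbin_eq_choose, Int.cast_sub, Int.cast_natCast]
  rw [mul_comm, ← nsmul_eq_mul, Ring.choose_smul_choose _ (Nat.le_add_right a b),
    Nat.add_sub_cancel_left]

theorem neg_one_pow_mul_gbin (n : ℤ) (j : ℕ) : (-1) ^ j * gbin n j = gbin (j - 1 - n) j := by
  have h := Ring.choose_neg (-(n : ℂ)) j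
  rw [neg_neg, Units.smul_def, Int.coe_negOnePow_natCast, zsmul_eq_mul] at h
  rw [gbin_eq_choose, gbin_eq_choose, h]
  push_cast
  rw [← mul_assoc, ← mul_pow]
  ring_nf

end PsDO

namespace PsDO

section SymbolCalculus

variable {R : Type*} [CommRing R] [Algebra ℂ R] (D : Derivation ℂ R R)

/-- Coefficients of `∂ ^ x ∘ Σ r, F r ∂ ^ (N - r)`, by the Leibniz rule
`∂ ^ x ∘ f = Σ j, (x choose j) f⁽ʲ⁾ ∂ ^ (x - j)`. -/
def dpowComp (x : ℤ) (F : ℕ → R) (q : ℕ) : R :=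
  ∑ jr ∈ antidiagonal q, gbin x jr.1 • D^[jr.1] (F jr.2)

def symbMul (a : ℤ) (F G : ℕ → R) (t : ℕ) : R :=
  ∑ sq ∈ antidiagonal t, F sq.1 * dpowComp D (a - sq.1) G sq.2

theorem dpowComp_sum_antidiagonal (x : ℤ) (H : ℕ → ℕ → R) (q : ℕ) :
    dpowComp D x (fun r => ∑ wr ∈ antidiagonal r, H wr.1 wr.2) q =
      ∑ wk ∈ antidiagonal q, dpowComp D x (H wk.1) wk.2 := by
  simp only [dpowComp, D.iterate_eq_coe_pow, map_sum, smul_sum]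
  exact Nat.sum_antidiagonal_sum_antidiagonal_snd_comm q
    fun j w r => gbin x j • ((D : R →ₗ[ℂ] R) ^ j) (H w r)

theorem dpowComp_zero_left (F : ℕ → R) : dpowComp D 0 F = F := by
  ext q
  rw [dpowComp, sum_eq_single (0, q)]
  · simp [gbin_zero_right]
  · rintro ⟨j, r⟩ hjr hne
    rw [HasAntidiagonal.mem_antidiagonal] at hjr
    have hj : 0 < j := Nat.pos_of_ne_zero fun hj => hne (by simp_all)
    rw [gbin_zero_left hj, zero_smul]
  · simp

theorem dpowComp_ite_zero (x : ℤ) :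
    dpowComp D x (fun r => if r = 0 then 1 else 0) = fun r => if r = 0 then 1 else 0 := by
  ext q
  rw [dpowComp, sum_eq_single (q, 0)]
  · rcases q with _ | q
    · simp [gbin_zero_right]
    · rw [Function.iterate_succ_apply, if_pos rfl, D.map_one_eq_zero,
        Function.iterate_fixed D.map_zero, smul_zero, if_neg q.succ_ne_zero]
  · rintro ⟨j, r⟩ hjr hne
    have hr : r ≠ 0 := fun hr => hne (by simp_all)
    rw [if_neg hr, Function.iterate_fixed D.map_zero, smul_zero]
  · simp

theorem dpowComp_dpowComp (x y : ℤ) (F : ℕ → R) :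
    dpowComp D x (dpowComp D y F) = dpowComp D (x + y) F := by
  ext q
  simp only [dpowComp, D.iterate_eq_coe_pow, map_sum, map_smul, smul_sum, smul_smul]
  rw [← Nat.sum_antidiagonal_sum_antidiagonal_fst q
    fun j i z => (gbin x j * gbin y i) • ((D : R →ₗ[ℂ] R) ^ j) (((D : R →ₗ[ℂ] R) ^ i) (F z))]
  refine sum_congr rfl fun kz _ => ?_
  rw [gbin_add, sum_smul]
  refine sum_congr rfl fun ji hji => ?_
  rw [← HasAntidiagonal.mem_antidiagonal.1 hji, pow_add, Module.End.mul_apply]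

theorem dpowComp_mul_left (x : ℤ) (f : R) (G : ℕ → R) (q : ℕ) :
    dpowComp D x (fun r => f * G r) q =
      ∑ ak ∈ antidiagonal q, (gbin x ak.1 • D^[ak.1] f) * dpowComp D (x - ak.1) G ak.2 := by
  simp only [dpowComp, D.iterate_leibniz, smul_sum, mul_sum, ← Nat.cast_smul_eq_nsmul ℂ,
    smul_smul, smul_mul_smul_comm]
  calc _ = ∑ jr ∈ antidiagonal q, ∑ ab ∈ antidiagonal jr.1,
          (gbin x (ab.1 + ab.2) * (ab.1 + ab.2).choose ab.1) • (D^[ab.1] f * D^[ab.2] (G jr.2)) :=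
        sum_congr rfl fun _ _ => sum_congr rfl fun _ hab => by
          rw [HasAntidiagonal.mem_antidiagonal.1 hab]
    _ = _ := by
      simp only [gbin_add_mul_choose]
      exact Nat.sum_antidiagonal_sum_antidiagonal_fst q
        fun a b r => (gbin x a * gbin (x - a) b) • (D^[a] f * D^[b] (G r))

theorem dpowComp_symbMul (x b : ℤ) (G H : ℕ → R) :
    dpowComp D x (symbMul D b G H) = symbMul D (x + b) (dpowComp D x G) H := by
  ext t
  unfold symbMul
  rw [dpowComp_sum_antidiagonal D x fun w r => G w * dpowComp D (b - w) H r]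
  simp only [dpowComp_mul_left, dpowComp_dpowComp]
  rw [Nat.sum_antidiagonal_sum_antidiagonal_snd_comm t fun w a m =>
      gbin x a • D^[a] (G w) * dpowComp D (x - a + (b - w)) H m,
    ← Nat.sum_antidiagonal_sum_antidiagonal_fst t fun a w m =>
      gbin x a • D^[a] (G w) * dpowComp D (x - a + (b - w)) H m]
  refine sum_congr rfl fun _ _ => ?_
  rw [dpowComp, sum_mul]
  refine sum_congr rfl fun _ haw => ?_
  rw [← HasAntidiagonal.mem_antidiagonal.1 haw]
  congr 2
  push_cast
  ring

theorem symbMul_assoc (a b : ℤ) (F G H : ℕ → R) :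
    symbMul D (a + b) (symbMul D a F G) H = symbMul D a F (symbMul D b G H) := by
  ext t
  simp only [symbMul, dpowComp_symbMul, sum_mul, mul_sum, mul_assoc]
  rw [← Nat.sum_antidiagonal_sum_antidiagonal_fst t fun u v m =>
    F u * (dpowComp D (a - u) G v * dpowComp D (a - u + b - v) H m)]
  refine sum_congr rfl fun _ _ => sum_congr rfl fun _ huv => ?_
  rw [← HasAntidiagonal.mem_antidiagonal.1 huv]
  congr 3
  push_cast
  ring

theorem symbMul_ite_zero_right (a : ℤ) (F : ℕ → R) :
    symbMul D a F (fun r => if r = 0 then 1 else 0) = F := by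
  ext t
  rw [symbMul, sum_eq_single (t, 0)]
  · simp [dpowComp_ite_zero]
  · rintro ⟨s, q⟩ hsq hne
    have hq : q ≠ 0 := fun hq => hne (by simp_all)
    simp [dpowComp_ite_zero, hq]
  · simp

theorem symbMul_ite_zero_left (G : ℕ → R) :
    symbMul D 0 (fun r => if r = 0 then 1 else 0) G = G := by
  ext t
  rw [symbMul, sum_eq_single (0, t)]
  · simp [dpowComp_zero_left]
  · rintro ⟨s, q⟩ hsq hne
    have hs : s ≠ 0 := fun hs => hne (by simp_all)
    simp [hs]
  · simp

end SymbolCalculus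

open PowerSeries

def Dpow (m : ℤ) : PsDO := (m, one.2)

/-- `A ∘ ∂ ^ m`. -/
def shift (A : PsDO) (m : ℤ) : PsDO := (A.1 + m, A.2)

theorem mul_fst (A B : PsDO) : (mul A B).1 = A.1 + B.1 := rfl

theorem mul_snd (A B : PsDO) : (mul A B).2 = symbMul (derivative ℂ) A.1 A.2 B.2 := by
  refine funext fun t => ?_
  unfold mul
  dsimp only
  rw [symbMul, Nat.sum_antidiagonal_eq_sum_range_succ
    fun s q => A.2 s * dpowComp (derivative ℂ) (A.1 - s) B.2 q]
  refine sum_congr rfl fun s hs => ?_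
  rw [dpowComp, Nat.sum_antidiagonal_eq_sum_range_succ
      fun j r => gbin (A.1 - s) j • (derivative ℂ)^[j] (B.2 r),
    Nat.sub_add_comm (Nat.le_of_lt_succ (mem_range.1 hs)), mul_sum]
  refine sum_congr rfl fun j _ => ?_
  rw [smul_eq_C_mul, mul_assoc]
  rfl

protected theorem mul_assoc (A B C : PsDO) : mul (mul A B) C = mul A (mul B C) :=
  Prod.ext (add_assoc A.1 B.1 C.1) (by simp only [mul_snd, mul_fst, symbMul_assoc])

theorem mul_Dpow (A : PsDO) (m : ℤ) : mul A (Dpow m) = shift A m :=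
  Prod.ext rfl ((mul_snd ..).trans (symbMul_ite_zero_right ..))

protected theorem mul_one (A : PsDO) : mul A one = A :=
  (mul_Dpow A 0).trans (Prod.ext (add_zero _) rfl)

protected theorem one_mul (A : PsDO) : mul one A = A :=
  Prod.ext (zero_add _) ((mul_snd ..).trans (symbMul_ite_zero_left ..))

protected theorem pow_one (A : PsDO) : pow A 1 = A :=
  PsDO.mul_one A

protected theorem pow_succ' (A : PsDO) (n : ℕ) : pow A (n + 1) = mul A (pow A n) :=
  Function.iterate_succ_apply' ..

theorem pow_Dx (n : ℕ) : pow Dx n = Dpow n := by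
  induction n with
  | zero => rfl
  | succ n ih =>
    rw [PsDO.pow_succ', ih, mul_Dpow]
    exact Prod.ext (by simp [shift, Dpow, Dx, add_comm]) rfl

theorem pow_conj {Φ Ψ : PsDO} (h : mul Ψ Φ = one) (A : PsDO) (n : ℕ) :
    pow (mul (mul Φ A) Ψ) (n + 1) = mul (mul Φ (pow A (n + 1))) Ψ := by
  have cancel (X : PsDO) : mul Ψ (mul Φ X) = X := by
    rw [← PsDO.mul_assoc, h, PsDO.one_mul]
  induction n with
  | zero => rw [zero_add, PsDO.pow_one, PsDO.pow_one]
  | succ n ih =>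
    rw [PsDO.pow_succ', ih, PsDO.pow_succ' A (n + 1)]
    simp only [PsDO.mul_assoc, cancel]

theorem coeffAt_sub (A : PsDO) (s : ℕ) : coeffAt A (A.1 - s) = A.2 s := by
  simp [coeffAt]

theorem ext_of_coeffAt {A B : PsDO} (h₁ : A.1 = B.1) (h₂ : ∀ n, coeffAt A n = coeffAt B n) :
    A = B := by
  refine Prod.ext h₁ (funext fun s => ?_)
  rw [← coeffAt_sub, h₂, h₁, coeffAt_sub]

theorem coeffAt_shift (A : PsDO) (m z : ℤ) : coeffAt (shift A m) z = coeffAt A (z - m) := by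
  simp only [coeffAt, shift, sub_le_iff_le_add, sub_sub_eq_add_sub]
  congr

theorem smul_shift (X A : PsDO) (m : ℤ) : smul X (shift A m) = shift (smul X A) m :=
  Prod.ext (add_assoc X.1 A.1 m).symm rfl

theorem smul_snd (A B : PsDO) (t : ℕ) :
    (smul A B).2 t = ∑ ab ∈ antidiagonal t, A.2 ab.1 * B.2 ab.2 :=
  (Nat.sum_antidiagonal_eq_sum_range_succ_mk (fun ab => A.2 ab.1 * B.2 ab.2) t).symm

theorem rightSym_snd (A : PsDO) (s : ℕ) :
    (rightSym A).2 s = dpowComp (derivative ℂ) (s - 1 - A.1) A.2 s := by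
  unfold rightSym
  dsimp only
  rw [dpowComp, Nat.sum_antidiagonal_eq_sum_range_succ
    fun j r => gbin (s - 1 - A.1) j • (derivative ℂ)^[j] (A.2 r)]
  refine sum_congr rfl fun j _ => ?_
  rw [neg_one_pow_mul_gbin, smul_eq_C_mul,
    show (j : ℤ) - 1 - (A.1 - (s - j)) = s - 1 - A.1 by ring]
  rfl

/-- `res_k ((e^{-kx} B) (A e^{kx})) = res_∂ (A B)`. -/
theorem coeffAt_smul_rightSym (A B : PsDO) :
    coeffAt (smul (rightSym B) A) (-1) = res (mul A B) := by
  have key (t : ℕ) (ht : (t : ℤ) = A.1 + B.1 + 1) :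
      (smul (rightSym B) A).2 t = (mul A B).2 t := by
    rw [smul_snd, mul_snd, symbMul, ← Nat.sum_antidiagonal_swap]
    refine sum_congr rfl fun sq hsq => ?_
    rw [HasAntidiagonal.mem_antidiagonal] at hsq
    rw [Prod.fst_swap, Prod.snd_swap, rightSym_snd, mul_comm]
    congr 2
    omega
  rw [res, coeffAt, coeffAt, show (smul (rightSym B) A).1 = A.1 + B.1 from add_comm B.1 A.1,
    mul_fst]
  split_ifs
  · exact key _ (by omega)
  · rfl

end PsDO

open PsDO

theorem stmt9_general (Φ Ψ : PsDO)
    (hΦord : Φ.1 = 0)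
    (hΨord : Ψ.1 = 0)
    (hinv₂ : ∀ n : ℤ, coeffAt (mul Ψ Φ) n = coeffAt one n) :
    ∀ n : ℕ, 1 ≤ n →
      coeffAt (smul (rightSym Ψ) Φ) (-(n : ℤ) - 1) =
        res (pow (mul (mul Φ Dx) Ψ) n) := by
  intro n hn
  obtain ⟨m, rfl⟩ := Nat.exists_eq_add_of_le' hn
  have hΨΦ : mul Ψ Φ = one := ext_of_coeffAt (by rw [mul_fst, hΨord, hΦord]; rfl) hinv₂
  rw [pow_conj hΨΦ, pow_Dx, mul_Dpow, ← coeffAt_smul_rightSym, smul_shift, coeffAt_shift]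
  congr 1
  ring

/-- `Φ` is the wave operator, `Ψ` its two-sided inverse,
`ℒ = Φ ∘ ∂ ∘ Φ^{−1}`. -/
theorem stmt9 (Φ Ψ : PsDO)
    (hΦord : Φ.1 = 0) (hΦ0 : Φ.2 0 = 1)
    (hΨord : Ψ.1 = 0) (hΨ0 : Ψ.2 0 = 1)
    (hinv₁ : ∀ n : ℤ, coeffAt (mul Φ Ψ) n = coeffAt one n)
    (hinv₂ : ∀ n : ℤ, coeffAt (mul Ψ Φ) n = coeffAt one n) :
    ∀ n : ℕ, 1 ≤ n →
      coeffAt (smul (rightSym Ψ) Φ) (-(n : ℤ) - 1) =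
        res (pow (mul (mul Φ Dx) Ψ) n) :=
  stmt9_general Φ Ψ hΦord hΨord hinv₂
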